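/- Equip S with the grading deg' determined by deg' x_j^{(i)} = j². Then for every 0 ≤ s, r ≤ l with r − s ≥ 2, every 0 ≤ w ≤ r − s − 2, and every m ≥ 0, the deg'-homogeneous component of highest deg'-degree of the coefficient of t^m in Q_{s,r,w} equals (−1)^s times the coefficient of t^m in Q'_{s,r,w} = (d^w x_s(t)/dt^w) · x_r(t); its deg'-degree is s² + r², and the coefficient of t^m in Q'_{s,r,w} is nonzero. -/

import Mathlib

open scoped BigOperators

/-- The homogeneous coordinate ring: polynomial ring in the variables `x_j^{(i)}`. -/
abbrev ArcRing (l : ℕ) := MvPolynomial (Fin (l + 1) × ℕ) ℂ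

/-- The series `x_j(t) = Σ_{i ≥ 0} x_j^{(i)} t^i`. -/
noncomputable def xSeries (l : ℕ) (j : Fin (l + 1)) : PowerSeries (ArcRing l) :=
  PowerSeries.mk fun i => MvPolynomial.X (j, i)

/-- The formal derivative `d/dt` of a formal power series. -/
noncomputable def tDeriv {R : Type*} [CommRing R] (f : PowerSeries R) : PowerSeries R :=
  PowerSeries.mk fun n => ((n + 1 : ℕ) : R) * PowerSeries.coeff (R := R) (n + 1) f

/-- The series `Q_{s,r,w} = Σ_{u=s}^{r-1} (-1)^u C(r-s-1, u-s) (d^w x_u(t)/dt^w) x_{r+s-u}(t)`. -/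
noncomputable def Qseries (l s r w : ℕ) (hr : r ≤ l) : PowerSeries (ArcRing l) :=
  ∑ u ∈ Finset.Icc s (r - 1),
    if h : s ≤ u ∧ u < r then
      ((-1 : ℂ) ^ u * ((r - s - 1).choose (u - s) : ℂ)) •
        (tDeriv^[w] (xSeries l ⟨u, by omega⟩) * xSeries l ⟨r + s - u, by omega⟩)
    else 0

/-- The series `Q'_{s,r,w} = (d^w x_s(t)/dt^w) · x_r(t)`. -/
noncomputable def Q'series (l s r w : ℕ) (hs : s ≤ l) (hr : r ≤ l) :
    PowerSeries (ArcRing l) :=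
  tDeriv^[w] (xSeries l ⟨s, by omega⟩) * xSeries l ⟨r, by omega⟩

/-- The grading `deg'` on the variables, `deg' x_j^{(i)} = j²`. -/
def degWeight (l : ℕ) : Fin (l + 1) × ℕ → ℕ := fun p => (p.1 : ℕ) ^ 2

open scoped BigOperators

-- iterated derivative coefficient
lemma coeff_tDeriv_iterate {R : Type*} [CommRing R] (w : ℕ) (f : PowerSeries R) (n : ℕ) :
    PowerSeries.coeff (R := R) n (tDeriv^[w] f)
      = ((n + w).descFactorial w : R) * PowerSeries.coeff (R := R) (n + w) f := by
  induction w generalizing n with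
  | zero => simp
  | succ w ih =>
    rw [Function.iterate_succ_apply', tDeriv, PowerSeries.coeff_mk, ih]
    have key : (n + (w + 1)).descFactorial (w + 1) = (n + 1) * ((n + 1 + w).descFactorial w) := by
      rw [Nat.descFactorial_succ]
      congr 1
      · omega
      · congr 1; omega
    rw [key]
    push_cast
    rw [show n + 1 + w = n + (w + 1) by omega]
    ring

def finOf (l u : ℕ) : Fin (l + 1) := ⟨min u l, Nat.lt_succ_of_le (min_le_right u l)⟩

lemma mk_eq_finOf (l u : ℕ) (hu : u ≤ l) (pf : u < l + 1) :
    (⟨u, pf⟩ : Fin (l + 1)) = finOf l u := by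
  apply Fin.ext
  simp [finOf, min_eq_left hu]

lemma finOf_coe (l u : ℕ) (hu : u ≤ l) : ((finOf l u : Fin (l + 1)) : ℕ) = u := by
  simp [finOf, min_eq_left hu]

noncomputable def PT (l u v w m : ℕ) : ArcRing l :=
  PowerSeries.coeff (R := ArcRing l) m (tDeriv^[w] (xSeries l (finOf l u)) * xSeries l (finOf l v))

open MvPolynomial Finset in
lemma PT_eq (l u v w m : ℕ) :
    PT l u v w m = ∑ p ∈ Finset.HasAntidiagonal.antidiagonal m,
      MvPolynomial.C (((p.1 + w).descFactorial w : ℂ)) *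
        (X (finOf l u, p.1 + w) * X (finOf l v, p.2)) := by
  rw [PT, PowerSeries.coeff_mul]
  refine Finset.sum_congr rfl fun p hp => ?_
  rw [coeff_tDeriv_iterate, xSeries, xSeries, PowerSeries.coeff_mk, PowerSeries.coeff_mk,
    map_natCast, mul_assoc]

open MvPolynomial Finset in
lemma PT_homog (l u v w m : ℕ) (hu : u ≤ l) (hv : v ≤ l) :
    IsWeightedHomogeneous (degWeight l) (PT l u v w m) (u ^ 2 + v ^ 2) := by
  rw [PT_eq]
  apply IsWeightedHomogeneous.sum
  intro p hp
  have h0 := isWeightedHomogeneous_C (degWeight l)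
    (R := ℂ) (((p.1 + w).descFactorial w : ℂ))
  have hx := isWeightedHomogeneous_X ℂ (degWeight l) (finOf l u, p.1 + w)
  have hx' := isWeightedHomogeneous_X ℂ (degWeight l) (finOf l v, p.2)
  have := h0.mul (hx.mul hx')
  simpa [degWeight, finOf_coe l u hu, finOf_coe l v hv] using this

open MvPolynomial Finset in
lemma PT_ne_zero (l u v w m : ℕ) : PT l u v w m ≠ 0 := by
  intro h
  have h1 := congrArg (MvPolynomial.eval (fun _ => (1 : ℂ))) h
  rw [PT_eq] at h1
  simp only [map_sum, map_mul, eval_C, eval_X, mul_one, map_zero] at h1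
  have h2 : ∑ p ∈ Finset.HasAntidiagonal.antidiagonal m, (((p.1 + w).descFactorial w : ℕ) : ℂ)
      = ((∑ p ∈ Finset.HasAntidiagonal.antidiagonal m, (p.1 + w).descFactorial w : ℕ) : ℂ) := by
    push_cast; rfl
  rw [h2] at h1
  have h3 : 0 < ∑ p ∈ Finset.HasAntidiagonal.antidiagonal m, (p.1 + w).descFactorial w := by
    apply Finset.sum_pos
    · intro p hp
      apply Nat.pos_of_ne_zero
      rw [Ne, Nat.descFactorial_eq_zero_iff_lt]
      omega
    · exact ⟨(0, m), by simp⟩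
  exact (Nat.cast_ne_zero (R := ℂ)).mpr h3.ne' h1

-- integer inequalities
lemma sq_ineq_le (s r u v : ℤ) (h1 : s ≤ u) (h2 : u < r) (h3 : u + v = r + s) :
    u ^ 2 + v ^ 2 ≤ s ^ 2 + r ^ 2 := by
  have hv : v = r + s - u := by linarith
  subst hv
  nlinarith [mul_nonneg (sub_nonneg.2 h1) (sub_nonneg.2 h2.le)]

lemma sq_ineq_lt (s r u v : ℤ) (h1 : s < u) (h2 : u < r) (h3 : u + v = r + s) :
    u ^ 2 + v ^ 2 < s ^ 2 + r ^ 2 := by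
  have hv : v = r + s - u := by linarith
  subst hv
  nlinarith [mul_pos (sub_pos.2 h1) (sub_pos.2 h2)]

lemma sq_ineq_le' (s r u : ℕ) (h1 : s ≤ u) (h2 : u < r) :
    u ^ 2 + (r + s - u) ^ 2 ≤ s ^ 2 + r ^ 2 := by
  have h3 : (u : ℤ) + ((r + s - u : ℕ) : ℤ) = (r : ℤ) + (s : ℤ) := by
    have : u ≤ r + s := by omega
    push_cast [Nat.cast_sub this]; ring
  have := sq_ineq_le (s : ℤ) r u ((r + s - u : ℕ) : ℤ) (by exact_mod_cast h1)
    (by exact_mod_cast h2) h3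
  exact_mod_cast this

lemma sq_ineq_lt' (s r u : ℕ) (h1 : s < u) (h2 : u < r) :
    u ^ 2 + (r + s - u) ^ 2 < s ^ 2 + r ^ 2 := by
  have h3 : (u : ℤ) + ((r + s - u : ℕ) : ℤ) = (r : ℤ) + (s : ℤ) := by
    have : u ≤ r + s := by omega
    push_cast [Nat.cast_sub this]; ring
  have := sq_ineq_lt (s : ℤ) r u ((r + s - u : ℕ) : ℤ) (by exact_mod_cast h1)
    (by exact_mod_cast h2) h3
  exact_mod_cast this

lemma smul_homog {l n : ℕ} (c : ℂ) {p : ArcRing l}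
    (h : MvPolynomial.IsWeightedHomogeneous (degWeight l) p n) :
    MvPolynomial.IsWeightedHomogeneous (degWeight l) (c • p) n := by
  rw [MvPolynomial.smul_eq_C_mul]
  simpa using (MvPolynomial.isWeightedHomogeneous_C (degWeight l) c).mul h

lemma coeffQ (l s r w m : ℕ) (hr : r ≤ l) (hsr : s + 2 ≤ r) :
    PowerSeries.coeff (R := ArcRing l) m (Qseries l s r w hr)
      = ∑ u ∈ Finset.Icc s (r - 1),
          ((-1 : ℂ) ^ u * ((r - s - 1).choose (u - s) : ℂ)) • PT l u (r + s - u) w m := by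
  rw [Qseries, map_sum]
  refine Finset.sum_congr rfl fun u hu => ?_
  rw [Finset.mem_Icc] at hu
  have hc : s ≤ u ∧ u < r := ⟨hu.1, by omega⟩
  rw [dif_pos hc, PowerSeries.coeff_smul]
  congr 1
  rw [PT, mk_eq_finOf l u (by omega), mk_eq_finOf l (r + s - u) (by omega)]

lemma coeffQ' (l s r w m : ℕ) (hs : s ≤ l) (hr : r ≤ l) :
    PowerSeries.coeff (R := ArcRing l) m (Q'series l s r w hs hr) = PT l s r w m := by
  rw [Q'series, PT, mk_eq_finOf l s hs, mk_eq_finOf l r hr]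

open MvPolynomial Finset in
/-- with `deg' x_j^{(i)} = j²`, for all `0 ≤ s, r ≤ l` with
`r - s ≥ 2`, all `0 ≤ w ≤ r - s - 2` and all `m ≥ 0`, the `deg'`-homogeneous component
of highest `deg'`-degree of the coefficient of `t^m` in `Q_{s,r,w}` equals `(-1)^s`
times the coefficient of `t^m` in `Q'_{s,r,w} = (d^w x_s(t)/dt^w) x_r(t)`; its
`deg'`-degree is `s² + r²`, and the coefficient of `t^m` in `Q'_{s,r,w}` is nonzero. -/
theorem highest_component_of_Q (l s r w m : ℕ) (hl : 1 ≤ l) (hr : r ≤ l)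
    (hsr : s + 2 ≤ r) (hw : w + s + 2 ≤ r) :
    MvPolynomial.weightedHomogeneousComponent (degWeight l)
        (MvPolynomial.weightedTotalDegree (degWeight l)
          (PowerSeries.coeff (R := ArcRing l) m (Qseries l s r w hr)))
        (PowerSeries.coeff (R := ArcRing l) m (Qseries l s r w hr)) =
      ((-1 : ℂ) ^ s) •
        PowerSeries.coeff (R := ArcRing l) m (Q'series l s r w (by omega) hr) ∧
    MvPolynomial.weightedTotalDegree (degWeight l)
        (PowerSeries.coeff (R := ArcRing l) m (Qseries l s r w hr)) = s ^ 2 + r ^ 2 ∧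
    PowerSeries.coeff (R := ArcRing l) m (Q'series l s r w (by omega) hr) ≠ 0 := by
  set D := degWeight l with hD
  set T : ℕ := s ^ 2 + r ^ 2 with hT
  have hsl : s ≤ l := by omega
  have hQ'eq : PowerSeries.coeff (R := ArcRing l) m (Q'series l s r w (by omega) hr)
      = PT l s r w m := coeffQ' l s r w m hsl hr
  -- the leading term
  have hg_homog : IsWeightedHomogeneous D (((-1 : ℂ) ^ s) • PT l s r w m) T :=
    smul_homog _ (PT_homog l s r w m hsl hr)
  have hg_ne : ((-1 : ℂ) ^ s) • PT l s r w m ≠ 0 :=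
    smul_ne_zero (pow_ne_zero _ (by norm_num)) (PT_ne_zero l s r w m)
  -- the splitting
  have hsplit : PowerSeries.coeff (R := ArcRing l) m (Qseries l s r w hr)
      = ((-1 : ℂ) ^ s) • PT l s r w m
        + ∑ u ∈ Finset.Ioc s (r - 1),
            ((-1 : ℂ) ^ u * ((r - s - 1).choose (u - s) : ℂ)) • PT l u (r + s - u) w m := by
    rw [coeffQ l s r w m hr hsr, Finset.Icc_eq_cons_Ioc (show s ≤ r - 1 by omega),
      Finset.sum_cons]
    congr 1
    rw [show r + s - s = r by omega, Nat.sub_self, Nat.choose_zero_right, Nat.cast_one, mul_one]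
  have hcomp_h : weightedHomogeneousComponent D T
      (∑ u ∈ Finset.Ioc s (r - 1),
        ((-1 : ℂ) ^ u * ((r - s - 1).choose (u - s) : ℂ)) • PT l u (r + s - u) w m) = 0 := by
    rw [map_sum]
    apply Finset.sum_eq_zero
    intro u hu
    rw [Finset.mem_Ioc] at hu
    rw [map_smul,
      (PT_homog l u (r + s - u) w m (by omega) (by omega)).weightedHomogeneousComponent_ne T
        (sq_ineq_lt' s r u hu.1 (by omega)).ne', smul_zero]
  have hcompT : weightedHomogeneousComponent D T
      (PowerSeries.coeff (R := ArcRing l) m (Qseries l s r w hr))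
      = ((-1 : ℂ) ^ s) • PT l s r w m := by
    rw [hsplit, map_add, hcomp_h, add_zero, hg_homog.weightedHomogeneousComponent_same]
  have hdeg : weightedTotalDegree D
      (PowerSeries.coeff (R := ArcRing l) m (Qseries l s r w hr)) = T := by
    apply le_antisymm
    · rw [weightedTotalDegree]
      apply Finset.sup_le
      intro d hd
      rw [mem_support_iff] at hd
      by_contra hlt
      push_neg at hlt
      apply hd
      rw [coeffQ l s r w m hr hsr, coeff_sum]
      apply Finset.sum_eq_zero
      intro u hu
      rw [Finset.mem_Icc] at hu
      rw [MvPolynomial.coeff_smul,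
        (PT_homog l u (r + s - u) w m (by omega) (by omega)).coeff_eq_zero d
          (lt_of_le_of_lt (sq_ineq_le' s r u hu.1 (by omega)) hlt).ne', smul_zero]
    · obtain ⟨d, hd⟩ := MvPolynomial.ne_zero_iff.mp hg_ne
      have h1 : MvPolynomial.coeff d (weightedHomogeneousComponent D T
          (PowerSeries.coeff (R := ArcRing l) m (Qseries l s r w hr))) ≠ 0 := by
        rw [hcompT]; exact hd
      rw [coeff_weightedHomogeneousComponent] at h1
      split_ifs at h1 with hcase
      · calc T = Finsupp.weight D d := hcase.symm
          _ ≤ _ := le_weightedTotalDegree D (mem_support_iff.mpr h1)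
      · exact absurd rfl h1
  refine ⟨?_, hdeg, ?_⟩
  · rw [hdeg, hQ'eq]; exact hcompT
  · rw [hQ'eq]; exact PT_ne_zero l s r w m
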